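/- The g elements ω_i (i ∈ ℤ/(g−1)) and η are linearly independent over ℂ, and the 3g−3 elements x_i := ω_i², y_i := ω_i·η, z_i := ω_{i−1}·ω_i (i ∈ ℤ/(g−1)) are linearly independent over ℂ. (Lemma 3.8: the listed differentials form bases of H⁰(C,ω_C) and of H⁰(C,ω_C²) for the rosary.) -/

import Mathlib

/-!
Write `t = u⁻¹`. Since `g - 1 ≥ 3`, the indices `i - 1, i, i + 1` are distinct, so
`xᵢ = eᵢ + t⁴ eᵢ₊₁`, `yᵢ = t eᵢ + t³ eᵢ₊₁` and `zᵢ = t² eᵢ`. Hence slot `j` of `∑ aᵢ ωᵢ + b η` is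
`aⱼ + b t + aⱼ₋₁ t²`, and slot `j` of `∑ aᵢ xᵢ + bᵢ yᵢ + cᵢ zᵢ` is
`aⱼ + bⱼ t + cⱼ t² + bⱼ₋₁ t³ + aⱼ₋₁ t⁴`. As `t` is transcendental over `ℂ`, its powers are
linearly independent, so every coefficient vanishes.
-/

noncomputable section

/-- The product ring `P = ∏_{i ∈ ℤ/(g-1)} ℂ(u)`. -/
abbrev Pro (g : ℕ) : Type := ZMod (g - 1) → RatFunc ℂ

/-- `ω_i := e_i + u^(-2)·e_(i+1)`. -/
def omegaR (g : ℕ) (i : ZMod (g - 1)) : Pro g :=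
  Pi.single i 1 + Pi.single (i + 1) (RatFunc.X ^ (-2 : ℤ))

/-- `η := Σ_i u^(-1)·e_i`, i.e. the constant tuple `u^(-1)`. -/
def etaR (g : ℕ) : Pro g := fun _ => RatFunc.X ^ (-1 : ℤ)

/-- `x_i := ω_i²`. -/
def xRos (g : ℕ) (i : ZMod (g - 1)) : Pro g := omegaR g i ^ 2

/-- `y_i := ω_i·η`. -/
def yRos (g : ℕ) (i : ZMod (g - 1)) : Pro g := omegaR g i * etaR g

/-- `z_i := ω_{i-1}·ω_i`. -/
def zRos (g : ℕ) (i : ZMod (g - 1)) : Pro g := omegaR g (i - 1) * omegaR g i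

theorem Transcendental.linearIndependent_pow {R A : Type*} [CommRing R] [Ring A] [Algebra R A]
    {x : A} (hx : Transcendental R x) : LinearIndependent R (fun n : ℕ => x ^ n) := by
  have := (Polynomial.basisMonomials R).linearIndependent.map' (Polynomial.aeval x).toLinearMap
    (LinearMap.ker_eq_bot.mpr (transcendental_iff_injective.mp hx))
  simpa [Polynomial.coe_basisMonomials, Function.comp_def] using this

theorem Transcendental.eq_zero_of_sum_smul_pow_eq_zero {R A : Type*} [CommRing R] [Ring A]
    [Algebra R A] {x : A} (hx : Transcendental R x) {n : ℕ} {c : Fin n → R}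
    (h : ∑ k, c k • x ^ (k : ℕ) = 0) (k : Fin n) : c k = 0 :=
  Fintype.linearIndependent_iff.mp (hx.linearIndependent_pow.comp _ Fin.val_injective) c h k

theorem RatFunc.transcendental_X_inv (K : Type*) [Field K] :
    Transcendental K (RatFunc.X : RatFunc K)⁻¹ :=
  fun h => RatFunc.transcendental_X (IsAlgebraic.inv_iff.mp h)

theorem ZMod.natCast_ne_zero_of_lt {n k : ℕ} (hk : 0 < k) (hkn : k < n) : (k : ZMod n) ≠ 0 := by
  rw [Ne, ZMod.natCast_eq_zero_iff]
  exact Nat.not_dvd_of_pos_of_lt hk hkn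

theorem Pi.single_mul_single_of_ne {ι M : Type*} [DecidableEq ι] [MulZeroClass M] {i j : ι}
    (h : i ≠ j) (a b : M) : (Pi.single i a * Pi.single j b : ι → M) = 0 := by
  rw [← Pi.single_mul_left, Pi.single_eq_of_ne h, mul_zero, Pi.single_zero]

theorem Finset.sum_smul_single_add_apply {G R M : Type*} [AddGroup G] [Fintype G] [DecidableEq G]
    [Semiring R] [AddCommMonoid M] [Module R M] (f : G → R) (k : G) (c : M) (j : G) :
    (∑ i, f i • Pi.single (i + k) c : G → M) j = f (j - k) • c := by
  rw [← (Equiv.subRight k).sum_comp (fun i => f i • (Pi.single (i + k) c : G → M))]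
  simp [Pi.single_apply, smul_ite]

section Rosary

variable {g : ℕ}

theorem omegaR_eq (i : ZMod (g - 1)) :
    omegaR g i = Pi.single i 1 + Pi.single (i + 1) (RatFunc.X⁻¹ ^ 2) := by
  simp [omegaR]

theorem etaR_eq : etaR g = fun _ => RatFunc.X⁻¹ :=
  funext fun _ => zpow_neg_one _

theorem xRos_eq (h1 : (1 : ZMod (g - 1)) ≠ 0) (i : ZMod (g - 1)) :
    xRos g i = Pi.single i 1 + Pi.single (i + 1) (RatFunc.X⁻¹ ^ 4) := by
  have hne : i ≠ i + 1 := by simpa using h1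
  rw [xRos, omegaR_eq, sq, add_mul, mul_add, mul_add, Pi.single_mul_single_of_ne hne,
    Pi.single_mul_single_of_ne hne.symm, ← Pi.single_mul, ← Pi.single_mul]
  simp only [one_mul, add_zero, zero_add, ← pow_add]

theorem yRos_eq (i : ZMod (g - 1)) :
    yRos g i = Pi.single i RatFunc.X⁻¹ + Pi.single (i + 1) (RatFunc.X⁻¹ ^ 3) := by
  rw [yRos, omegaR_eq, etaR_eq, add_mul, ← Pi.single_mul_left, ← Pi.single_mul_left]
  simp only [one_mul, ← pow_succ]

theorem zRos_eq (h1 : (1 : ZMod (g - 1)) ≠ 0) (h2 : (2 : ZMod (g - 1)) ≠ 0)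
    (i : ZMod (g - 1)) : zRos g i = Pi.single i (RatFunc.X⁻¹ ^ 2) := by
  have h01 : i - 1 ≠ i := by simpa using h1
  have h02 : i - 1 ≠ i + 1 := by
    rw [Ne, sub_eq_iff_eq_add, add_assoc, left_eq_add]; simpa [one_add_one_eq_two] using h2
  have h12 : i ≠ i + 1 := by simpa using h1
  rw [zRos, omegaR_eq, omegaR_eq, sub_add_cancel, add_mul, mul_add, mul_add,
    Pi.single_mul_single_of_ne h01, Pi.single_mul_single_of_ne h02,
    Pi.single_mul_single_of_ne h12, ← Pi.single_mul]
  simp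

variable [NeZero (g - 1)]

theorem canonical_combination_apply (a : ZMod (g - 1) → ℂ) (b : ℂ) (j : ZMod (g - 1)) :
    (∑ i, a i • omegaR g i + b • etaR g) j =
      a j • 1 + b • RatFunc.X⁻¹ + a (j - 1) • RatFunc.X⁻¹ ^ 2 := by
  have hω := Finset.sum_smul_single_add_apply a 0 (1 : RatFunc ℂ) j
  have hω' := Finset.sum_smul_single_add_apply a 1 (RatFunc.X⁻¹ ^ 2 : RatFunc ℂ) j
  simp only [add_zero, sub_zero] at hω
  simp only [omegaR_eq, etaR_eq, smul_add, Finset.sum_add_distrib, Pi.add_apply, Pi.smul_apply,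
    hω, hω']
  exact add_right_comm _ _ _

theorem bicanonical_combination_apply (h1 : (1 : ZMod (g - 1)) ≠ 0) (h2 : (2 : ZMod (g - 1)) ≠ 0)
    (a b c : ZMod (g - 1) → ℂ) (j : ZMod (g - 1)) :
    (∑ i, a i • xRos g i + ∑ i, b i • yRos g i + ∑ i, c i • zRos g i) j =
      a j • 1 + b j • RatFunc.X⁻¹ + c j • RatFunc.X⁻¹ ^ 2 + b (j - 1) • RatFunc.X⁻¹ ^ 3 +
        a (j - 1) • RatFunc.X⁻¹ ^ 4 := by
  have hx := Finset.sum_smul_single_add_apply a 0 (1 : RatFunc ℂ) j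
  have hx' := Finset.sum_smul_single_add_apply a 1 (RatFunc.X⁻¹ ^ 4 : RatFunc ℂ) j
  have hy := Finset.sum_smul_single_add_apply b 0 (RatFunc.X⁻¹ : RatFunc ℂ) j
  have hy' := Finset.sum_smul_single_add_apply b 1 (RatFunc.X⁻¹ ^ 3 : RatFunc ℂ) j
  have hz := Finset.sum_smul_single_add_apply c 0 (RatFunc.X⁻¹ ^ 2 : RatFunc ℂ) j
  simp only [add_zero, sub_zero] at hx hy hz
  simp only [xRos_eq h1, yRos_eq, zRos_eq h1 h2, smul_add, Finset.sum_add_distrib, Pi.add_apply,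
    hx, hx', hy, hy', hz]
  abel

theorem linearIndependent_omegaR_etaR :
    LinearIndependent ℂ (Sum.elim (omegaR g) (fun _ : Unit => etaR g)) := by
  refine Fintype.linearIndependent_iff.mpr fun f hf => ?_
  have hc (j : ZMod (g - 1)) :=
    (RatFunc.transcendental_X_inv ℂ).eq_zero_of_sum_smul_pow_eq_zero
      (c := ![f (.inl j), f (.inr ()), f (.inl (j - 1))]) <| by
    have hj : (∑ i, f (.inl i) • omegaR g i + f (.inr ()) • etaR g) j = 0 := by
      simpa [Fintype.sum_sum_type] using congrFun hf j
    rw [canonical_combination_apply] at hj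
    rw [Fin.sum_univ_three]
    simpa using hj
  rintro (j | ⟨⟩)
  · exact hc j 0
  · exact hc 0 1

theorem linearIndependent_xRos_yRos_zRos (h1 : (1 : ZMod (g - 1)) ≠ 0)
    (h2 : (2 : ZMod (g - 1)) ≠ 0) :
    LinearIndependent ℂ (Sum.elim (xRos g) (Sum.elim (yRos g) (zRos g))) := by
  refine Fintype.linearIndependent_iff.mpr fun f hf => ?_
  have hc (j : ZMod (g - 1)) :=
    (RatFunc.transcendental_X_inv ℂ).eq_zero_of_sum_smul_pow_eq_zero
      (c := ![f (.inl j), f (.inr (.inl j)), f (.inr (.inr j)), f (.inr (.inl (j - 1))),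
        f (.inl (j - 1))]) <| by
    have hj : (∑ i, f (.inl i) • xRos g i + ∑ i, f (.inr (.inl i)) • yRos g i +
        ∑ i, f (.inr (.inr i)) • zRos g i) j = 0 := by
      simpa [Fintype.sum_sum_type, add_assoc] using congrFun hf j
    rw [bicanonical_combination_apply h1 h2] at hj
    rw [Fin.sum_univ_five]
    simpa using hj
  rintro (j | j | j)
  · exact hc j 0
  · exact hc j 1
  · exact hc j 2

end Rosary

theorem rosary_sections_linearIndependent_general (g : ℕ) (hg : 5 ≤ g) :
    LinearIndependent ℂ (Sum.elim (omegaR g) (fun _ : Unit => etaR g)) ∧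
    LinearIndependent ℂ (Sum.elim (xRos g) (Sum.elim (yRos g) (zRos g))) := by
  have : NeZero (g - 1) := ⟨by omega⟩
  have h1 : (1 : ZMod (g - 1)) ≠ 0 := by
    exact_mod_cast ZMod.natCast_ne_zero_of_lt (k := 1) one_pos (by omega)
  have h2 : (2 : ZMod (g - 1)) ≠ 0 := by
    exact_mod_cast ZMod.natCast_ne_zero_of_lt (k := 2) two_pos (by omega)
  exact ⟨linearIndependent_omegaR_etaR, linearIndependent_xRos_yRos_zRos h1 h2⟩

/-- Lemma 3.8: the `g` canonical sections `ω_i, η` are linearly independent, and so are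
the `3g-3` bicanonical sections `x_i, y_i, z_i`. -/
theorem rosary_sections_linearIndependent (g : ℕ) (hodd : Odd g) (hg : 5 ≤ g) :
    LinearIndependent ℂ (Sum.elim (omegaR g) (fun _ : Unit => etaR g)) ∧
    LinearIndependent ℂ (Sum.elim (xRos g) (Sum.elim (yRos g) (zRos g))) :=
  rosary_sections_linearIndependent_general g hg

end
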